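/- Let G be an ordered graph with at most n vertices, h ≥ 1 a real number, and e ∈ E(G) an edge with h(e,G) ≥ 21·h·log₂ n. Then there is a subgraph H ⊆ G with average degree d̄(H) ≥ h such that for each f ∈ E(H) there is an increasing trail T in G which starts with the edge e, ends with the edge f, has length at most 2 + log₂ n, and satisfies h(g,G) ≥ h(e,G) − 7h(log₂ n + 2) for every edge g ∈ E(T). -/

import Mathlib

open scoped Classical

namespace EO

/-- Auxiliary choice function for building the height table: given the list `prev` of the
(optional) entries at all earlier scanning positions, `htPick N G w k prev` is the entry at
scanning position `k`, namely the `w`-largest edge of `G` containing the column vertex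
`⟨k % N⟩` of position `k` that does not occur among the earlier entries, if any exists. -/
noncomputable def htPick (N : ℕ) (G : SimpleGraph (Fin N)) (w : Sym2 (Fin N) → ℕ)
    (k : ℕ) (prev : List (Option (Sym2 (Fin N)))) : Option (Sym2 (Fin N)) :=
  if hN : 0 < N then
    if h : ∃ e, (e ∈ G.edgeSet ∧ (⟨k % N, Nat.mod_lt k hN⟩ : Fin N) ∈ e ∧
          some e ∉ prev) ∧
        ∀ f, (f ∈ G.edgeSet ∧ (⟨k % N, Nat.mod_lt k hN⟩ : Fin N) ∈ f ∧
          some f ∉ prev) → w f ≤ w e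
    then some h.choose else none
  else none

/-- The list of the first `k` entries of the height table of the ordered graph `G`
(vertex set `Fin N` with its natural vertex order, edge order given by the injective
weight `w`).  Scanning position `k` corresponds to row `k / N + 1` and column `⟨k % N⟩`,
so scanning positions in increasing order of `k` is exactly scanning the table in
increasing lexicographic order (row first, then vertex order within a row). -/
noncomputable def htList (N : ℕ) (G : SimpleGraph (Fin N)) (w : Sym2 (Fin N) → ℕ) :
    ℕ → List (Option (Sym2 (Fin N)))
  | 0 => []
  | k + 1 => htList N G w k ++ [htPick N G w k (htList N G w k)]

/-- The entry of the height table of `G` at scanning position `k`: the `w`-largest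
not-yet-entered edge containing the column vertex of position `k`, if any. -/
noncomputable def htEntry (N : ℕ) (G : SimpleGraph (Fin N)) (w : Sym2 (Fin N) → ℕ)
    (k : ℕ) : Option (Sym2 (Fin N)) :=
  htPick N G w k (htList N G w k)

/-- The scanning index at which the edge `e` is entered into the height table
(junk value `0` if `e` is never entered; every edge of `G` is in fact entered exactly
once).  The lexicographic order on table positions corresponds exactly to the order of
scanning indices. -/
noncomputable def htIndex (N : ℕ) (G : SimpleGraph (Fin N)) (w : Sym2 (Fin N) → ℕ)
    (e : Sym2 (Fin N)) : ℕ :=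
  if h : ∃ k, htEntry N G w k = some e then Nat.find h else 0

/-- The height (row, `1`-indexed) of the edge `e` in the height table of `G`. -/
noncomputable def height (N : ℕ) (G : SimpleGraph (Fin N)) (w : Sym2 (Fin N) → ℕ)
    (e : Sym2 (Fin N)) : ℕ :=
  htIndex N G w e / N + 1

/-- The index of the column (vertex) of the edge `e` in the height table of `G`. -/
noncomputable def col (N : ℕ) (G : SimpleGraph (Fin N)) (w : Sym2 (Fin N) → ℕ)
    (e : Sym2 (Fin N)) : ℕ :=
  htIndex N G w e % N

/-- The column vertex of the edge `e` in the height table of `G` (for `N > 0`). -/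
noncomputable def colV (N : ℕ) (hN : 0 < N) (G : SimpleGraph (Fin N))
    (w : Sym2 (Fin N) → ℕ) (e : Sym2 (Fin N)) : Fin N :=
  ⟨htIndex N G w e % N, Nat.mod_lt _ hN⟩

/-- A list of edges is increasing (with respect to the edge order given by `w`) if
consecutive entries are strictly increasing. -/
def Increasing {V : Type*} (w : Sym2 V → ℕ) (l : List (Sym2 V)) : Prop :=
  l.Chain' fun a b => w a < w b

end EO

/-!
Grow layers of edges downwards through the height table, starting from the layer `{e}`.
If the edges `S` of a layer do not span a subgraph of average degree at least `h`, they cover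
more than `2|S|/h` vertices. At each covered vertex `u` pick an edge `g_u` of the layer; the
`D = ⌊7h⌋` cells just below `g_u` in column `u` hold distinct edges through `u`, all heavier than
`g_u` because `g_u` was still available there. Increasing trails arriving at `u` therefore
extend by one step, and the next layer has at least `D · |V(S)| > 12 |S|` edges, all at most
`D` rows lower. A layer after `i` steps lies in `D i + 1` rows of at most `N` cells, while
`12 ^ L > 3 n²` for `L = ⌊log₂ n⌋ + 1`; so some layer before step `L` is dense, and its edges are
reached by increasing trails of length at most `L` whose heights stay above
`h(e) - D L ≥ h(e) - 7h(log₂ n + 2)`.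
-/

namespace EO

section Table

variable {N : ℕ} {G : SimpleGraph (Fin N)} {w : Sym2 (Fin N) → ℕ}

lemma htList_eq_map (k : ℕ) : htList N G w k = (List.range k).map (htEntry N G w) := by
  induction k with
  | zero => simp [htList]
  | succ k ih => rw [htList, List.range_succ, List.map_append, ← ih]; rfl

lemma some_mem_htList_iff {k : ℕ} {f : Sym2 (Fin N)} :
    some f ∈ htList N G w k ↔ ∃ j < k, htEntry N G w j = some f := by
  simp [htList_eq_map]

def IsCandidate (G : SimpleGraph (Fin N)) (w : Sym2 (Fin N) → ℕ) (hN : 0 < N) (k : ℕ)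
    (f : Sym2 (Fin N)) : Prop :=
  f ∈ G.edgeSet ∧ (⟨k % N, Nat.mod_lt k hN⟩ : Fin N) ∈ f ∧ ∀ j < k, htEntry N G w j ≠ some f

lemma isCandidate_iff (hN : 0 < N) {k : ℕ} {f : Sym2 (Fin N)} :
    IsCandidate G w hN k f ↔ f ∈ G.edgeSet ∧ (⟨k % N, Nat.mod_lt k hN⟩ : Fin N) ∈ f ∧
      some f ∉ htList N G w k := by
  simp [IsCandidate, some_mem_htList_iff]

lemma htEntry_spec (hN : 0 < N) {k : ℕ} {f : Sym2 (Fin N)} (hf : htEntry N G w k = some f) :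
    IsCandidate G w hN k f ∧ ∀ c, IsCandidate G w hN k c → w c ≤ w f := by
  unfold htEntry htPick at hf
  simp only [dif_pos hN] at hf
  split_ifs at hf with hex
  obtain rfl := Option.some_injective _ hf
  simp only [isCandidate_iff]
  exact hex.choose_spec

lemma exists_htEntry_of_isCandidate (hN : 0 < N) {k : ℕ} {c : Sym2 (Fin N)}
    (hc : IsCandidate G w hN k c) : ∃ f, htEntry N G w k = some f := by
  have hfin : {f | IsCandidate G w hN k f}.Finite := Set.toFinite _
  obtain ⟨a, ha, hmax⟩ := hfin.exists_maximalFor w _ ⟨c, hc⟩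
  have hex : ∃ a, IsCandidate G w hN k a ∧ ∀ f, IsCandidate G w hN k f → w f ≤ w a :=
    ⟨a, ha, fun f hf => by by_contra! hlt; exact (hmax hf hlt.le).not_gt hlt⟩
  simp only [isCandidate_iff] at hex
  unfold htEntry htPick
  simp only [dif_pos hN, dif_pos hex]
  exact ⟨_, rfl⟩

lemma pos_of_htEntry_eq_some {k : ℕ} {f : Sym2 (Fin N)} (hf : htEntry N G w k = some f) :
    0 < N := by
  by_contra hN
  simp [htEntry, htPick, hN] at hf

lemma eq_of_htEntry_eq_some {j k : ℕ} {f : Sym2 (Fin N)}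
    (hj : htEntry N G w j = some f) (hk : htEntry N G w k = some f) : j = k := by
  have hN := pos_of_htEntry_eq_some hj
  by_contra hne
  rcases Nat.lt_or_gt_of_ne hne with hlt | hlt
  · exact (htEntry_spec hN hk).1.2.2 j hlt hj
  · exact (htEntry_spec hN hj).1.2.2 k hlt hk

lemma htIndex_eq {p : ℕ} {f : Sym2 (Fin N)} (hp : htEntry N G w p = some f) :
    htIndex N G w f = p := by
  have hex : ∃ k, htEntry N G w k = some f := ⟨p, hp⟩
  rw [htIndex, dif_pos hex]
  exact eq_of_htEntry_eq_some (Nat.find_spec hex) hp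

lemma mk_mul_add_mod_eq (hN : 0 < N) (r : ℕ) (u : Fin N) :
    (⟨(r * N + u) % N, Nat.mod_lt _ hN⟩ : Fin N) = u :=
  Fin.ext (by simp [Nat.mod_eq_of_lt u.isLt])

/-- Every edge is entered: otherwise it would be a candidate in every row, and the
entries made in its columns would be infinitely many distinct edges. -/
lemma exists_htEntry {f : Sym2 (Fin N)} (hf : f ∈ G.edgeSet) :
    ∃ p, htEntry N G w p = some f := by
  obtain ⟨u, hu⟩ : ∃ u, u ∈ f := ⟨_, f.out_fst_mem⟩
  have hN : 0 < N := u.pos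
  by_contra! hnot
  have hcand (r : ℕ) : IsCandidate G w hN (r * N + u) f :=
    ⟨hf, by rwa [mk_mul_add_mod_eq hN], fun j _ => hnot j⟩
  choose F hF using fun r => exists_htEntry_of_isCandidate hN (hcand r)
  refine not_injective_infinite_finite F fun r r' hrr' => ?_
  have := eq_of_htEntry_eq_some (hF r) (hrr' ▸ hF r')
  exact Nat.eq_of_mul_eq_mul_right hN (by omega)

lemma htEntry_htIndex {f : Sym2 (Fin N)} (hf : f ∈ G.edgeSet) :
    htEntry N G w (htIndex N G w f) = some f := by
  obtain ⟨p, hp⟩ := exists_htEntry hf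
  rwa [htIndex_eq hp]

lemma htIndex_injOn : Set.InjOn (htIndex N G w) G.edgeSet := fun _ hf _ hf' h =>
  Option.some_injective _ <| (htEntry_htIndex hf).symm.trans (h ▸ htEntry_htIndex hf')

lemma height_col_injOn :
    Set.InjOn (fun f => (height N G w f, col N G w f)) G.edgeSet := by
  intro f hf f' hf' h
  simp only [height, col, Prod.mk.injEq, Nat.add_right_cancel_iff] at h
  refine htIndex_injOn (w := w) hf hf' ?_
  rw [← Nat.div_add_mod (htIndex N G w f) N, ← Nat.div_add_mod (htIndex N G w f') N, h.1, h.2]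

/-- `f` was still available at each cell below it in the column of `u`, so whatever was entered
there is heavier than `f`. -/
lemma exists_heavier_of_lt_height (hw : Function.Injective w) {f : Sym2 (Fin N)}
    (hf : f ∈ G.edgeSet) {u : Fin N} (hu : u ∈ f) {r : ℕ} (hr : r + 1 < height N G w f) :
    ∃ f' ∈ G.edgeSet, u ∈ f' ∧ height N G w f' = r + 1 ∧ col N G w f' = u ∧ w f < w f' := by
  have hN : 0 < N := u.pos
  obtain ⟨p, hp⟩ := exists_htEntry (w := w) hf
  have hq : r * N + u < p := by
    have : (r + 1) * N ≤ p :=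
      (Nat.le_div_iff_mul_le hN).mp (by rw [height, htIndex_eq hp] at hr; omega)
    rw [Nat.succ_mul] at this
    omega
  have hcand : IsCandidate G w hN (r * N + u) f :=
    ⟨hf, by rwa [mk_mul_add_mod_eq hN], fun j hj hje => by
      rw [eq_of_htEntry_eq_some hje hp] at hj; omega⟩
  obtain ⟨f', hf'⟩ := exists_htEntry_of_isCandidate hN hcand
  obtain ⟨⟨hf'G, hu', -⟩, hmax⟩ := htEntry_spec hN hf'
  have hne : f ≠ f' := fun h => by
    subst h
    have := eq_of_htEntry_eq_some hf' hp
    omega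
  rw [mk_mul_add_mod_eq hN] at hu'
  refine ⟨f', hf'G, hu', ?_, ?_, lt_of_le_of_ne (hmax f hcand) (hw.ne hne)⟩
  · rw [height, htIndex_eq hf', Nat.mul_comm, Nat.mul_add_div hN, Nat.div_eq_of_lt u.isLt]
  · rw [col, htIndex_eq hf']
    simp [Nat.mod_eq_of_lt u.isLt]

lemma height_le_degree (hw : Function.Injective w) {f : Sym2 (Fin N)} (hf : f ∈ G.edgeSet)
    {u : Fin N} (hu : u ∈ f) : height N G w f ≤ G.degree u := by
  have hsurj : Set.SurjOn (height N G w) (G.incidenceFinset u)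
      (Finset.Icc 1 (height N G w f)) := by
    intro j hj
    obtain ⟨r, rfl, hr⟩ : ∃ r, j = r + 1 ∧ r + 1 ≤ height N G w f :=
      ⟨j - 1, by simp only [Finset.coe_Icc, Set.mem_Icc] at hj; omega⟩
    rcases hr.lt_or_eq with hlt | heq
    · obtain ⟨f', hf', hu', hh, -⟩ := exists_heavier_of_lt_height hw hf hu hlt
      exact ⟨f', by simpa [SimpleGraph.incidenceSet] using ⟨hf', hu'⟩, hh⟩
    · exact ⟨f, by simpa [SimpleGraph.incidenceSet] using ⟨hf, hu⟩, heq.symm⟩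
  have := Finset.card_le_card_of_surjOn _ hsurj
  rwa [Nat.card_Icc, Nat.add_sub_cancel, G.card_incidenceFinset_eq_degree] at this

end Table

section Increasing

variable {V : Type*} {w : Sym2 V → ℕ} {l : List (Sym2 V)}

lemma Increasing.pairwise (hl : Increasing w l) : l.Pairwise fun a b => w a < w b :=
  List.pairwise_map.mp ((List.isChain_map w).mpr hl).pairwise

lemma Increasing.nodup (hl : Increasing w l) : l.Nodup :=
  hl.pairwise.imp fun hab heq => hab.ne (congrArg w heq)

lemma Increasing.concat {x f : Sym2 V} (hl : Increasing w l) (hx : x ∈ l.getLast?)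
    (hf : w x < w f) : Increasing w (l ++ [f]) :=
  hl.append (List.isChain_singleton f) fun a ha b hb => by
    obtain rfl := Option.mem_unique ha hx
    obtain rfl : f = b := by simpa using hb
    exact hf

end Increasing

section Walks

variable {N : ℕ} {G : SimpleGraph (Fin N)} {w : Sym2 (Fin N) → ℕ} {e : Sym2 (Fin N)} {B : ℝ}
  {m : ℕ}

def IsClimb (G : SimpleGraph (Fin N)) (w : Sym2 (Fin N) → ℕ) (e : Sym2 (Fin N)) (B : ℝ)
    (m : ℕ) {x y : Fin N} (T : G.Walk x y) : Prop :=
  Increasing w T.edges ∧ T.edges.head? = some e ∧ T.length ≤ m ∧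
    ∀ g ∈ T.edges, B ≤ height N G w g

lemma IsClimb.mono {x y : Fin N} {T : G.Walk x y} (hT : IsClimb G w e B m T) {m' : ℕ}
    (hm : m ≤ m') : IsClimb G w e B m' T :=
  ⟨hT.1, hT.2.1, hT.2.2.1.trans hm, hT.2.2.2⟩

lemma IsClimb.concat {x y z : Fin N} {T : G.Walk x y} (hT : IsClimb G w e B m T)
    {ℓ : Sym2 (Fin N)} (hℓ : ℓ ∈ T.edges.getLast?) (hadj : G.Adj y z) (hℓz : w ℓ < w s(y, z))
    (hB : B ≤ height N G w s(y, z)) : IsClimb G w e B (m + 1) (T.concat hadj) := by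
  obtain ⟨hinc, hhead, hlen, hheight⟩ := hT
  have hne : T.edges ≠ [] := by rintro h; simp [h] at hhead
  rw [IsClimb, SimpleGraph.Walk.edges_concat, List.concat_eq_append,
    SimpleGraph.Walk.length_concat]
  refine ⟨hinc.concat hℓ hℓz, by simp [List.head?_append_of_ne_nil _ hne, hhead], by omega, ?_⟩
  simp only [List.mem_append, List.mem_singleton]
  rintro g (hg | rfl)
  exacts [hheight g hg, hB]

def ClimbsTo (G : SimpleGraph (Fin N)) (w : Sym2 (Fin N) → ℕ) (e : Sym2 (Fin N)) (B : ℝ)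
    (m : ℕ) (f : Sym2 (Fin N)) : Prop :=
  ∃ (x y : Fin N) (T : G.Walk x y), IsClimb G w e B m T ∧ T.edges.getLast? = some f

/-- The climb can be continued by any edge at `u` of weight above `b`. -/
def ArrivesAt (G : SimpleGraph (Fin N)) (w : Sym2 (Fin N) → ℕ) (e : Sym2 (Fin N)) (B : ℝ)
    (m : ℕ) (u : Fin N) (b : ℕ) : Prop :=
  ∃ (x : Fin N) (T : G.Walk x u), IsClimb G w e B m T ∧ ∃ ℓ ∈ T.edges.getLast?, w ℓ ≤ b

lemma ArrivesAt.extend {u : Fin N} {b : ℕ} (h : ArrivesAt G w e B m u b) {f : Sym2 (Fin N)}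
    (hf : f ∈ G.edgeSet) (hu : u ∈ f) (hb : b < w f) (hB : B ≤ height N G w f) :
    ClimbsTo G w e B (m + 1) f ∧ ∀ v ∈ f, ArrivesAt G w e B (m + 1) v (w f) := by
  obtain ⟨x, T, hT, ℓ, hℓ, hℓb⟩ := h
  obtain ⟨z, rfl⟩ := Sym2.mem_iff_exists.mp hu
  have hadj : G.Adj u z := hf
  have hT' := hT.concat hℓ hadj (hℓb.trans_lt hb) hB
  have hlast : (T.concat hadj).edges.getLast? = some s(u, z) := by
    rw [SimpleGraph.Walk.edges_concat, List.concat_eq_append, List.getLast?_concat]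
  refine ⟨⟨x, z, _, hT', hlast⟩, fun v hv => ?_⟩
  rcases Sym2.mem_iff.mp hv with rfl | rfl
  · exact ⟨x, T, hT.mono m.le_succ, ℓ, hℓ, by omega⟩
  · exact ⟨x, _, hT', _, hlast, le_rfl⟩

end Walks

noncomputable def coveredVerts {V : Type*} [Fintype V] (S : Finset (Sym2 V)) : Finset V :=
  {v | ∃ g ∈ S, v ∈ g}

lemma exists_subgraph_edgeSet_eq {V : Type*} [Fintype V] {G : SimpleGraph V}
    (S : Finset (Sym2 V)) (hS : ∀ g ∈ S, g ∈ G.edgeSet) :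
    ∃ H : G.Subgraph, H.edgeSet = S ∧ H.verts = coveredVerts S := by
  refine ⟨{ verts := coveredVerts S
            Adj := fun a b => s(a, b) ∈ S
            adj_sub := fun hab => hS _ hab
            edge_vert := fun {a b} hab => by
              simpa [coveredVerts] using ⟨_, hab, Sym2.mem_mk_left a b⟩
            symm := ⟨fun a b hab => by rwa [Sym2.eq_swap]⟩ }, ?_, rfl⟩
  ext g
  induction g using Sym2.ind
  rfl

section Layers

variable {N : ℕ} {G : SimpleGraph (Fin N)} {w : Sym2 (Fin N) → ℕ} {e : Sym2 (Fin N)} {B : ℝ}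
  {D i : ℕ} {S : Finset (Sym2 (Fin N))}

def IsLayer (G : SimpleGraph (Fin N)) (w : Sym2 (Fin N) → ℕ) (e : Sym2 (Fin N)) (B : ℝ)
    (D i : ℕ) (S : Finset (Sym2 (Fin N))) : Prop :=
  ∀ g ∈ S, g ∈ G.edgeSet ∧ height N G w g ≤ height N G w e ∧
    height N G w e ≤ height N G w g + D * i ∧ ClimbsTo G w e B (i + 1) g ∧
    ∀ u ∈ g, ArrivesAt G w e B (i + 1) u (w g)

lemma exists_climb_singleton (he : e ∈ G.edgeSet) (hB : B ≤ height N G w e) {u : Fin N}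
    (hu : u ∈ e) : ∃ (x : Fin N) (T : G.Walk x u), IsClimb G w e B 1 T ∧
      T.edges.getLast? = some e := by
  obtain ⟨z, rfl⟩ := Sym2.mem_iff_exists.mp hu
  have hadj : G.Adj z u := (show G.Adj u z from he).symm
  refine ⟨z, .cons hadj .nil, ⟨List.isChain_singleton _, ?_, le_rfl, ?_⟩, ?_⟩
  · simp [Sym2.eq_swap]
  · simpa [Sym2.eq_swap] using hB
  · simp [Sym2.eq_swap]

lemma isLayer_zero (he : e ∈ G.edgeSet) (hB : B ≤ height N G w e) :
    IsLayer G w e B D 0 {e} := by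
  intro g hg
  obtain rfl := Finset.mem_singleton.mp hg
  refine ⟨he, le_rfl, by simp, ?_, fun u hu => ?_⟩
  · obtain ⟨x, T, hT, hlast⟩ := exists_climb_singleton he hB g.out_fst_mem
    exact ⟨x, _, T, hT, hlast⟩
  · obtain ⟨x, T, hT, hlast⟩ := exists_climb_singleton he hB hu
    exact ⟨x, T, hT, g, hlast, le_rfl⟩

lemma IsLayer.card_le (hS : IsLayer G w e B D i S) : S.card ≤ (D * i + 1) * N := by
  have hmaps : ∀ g ∈ S, (height N G w g, col N G w g) ∈
      Finset.Icc (height N G w e - D * i) (height N G w e) ×ˢ Finset.range N := by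
    intro g hg
    obtain ⟨hgE, hle, hge, -⟩ := hS g hg
    obtain ⟨u, -⟩ : ∃ u, u ∈ g := ⟨_, g.out_fst_mem⟩
    simp only [Finset.mem_product, Finset.mem_Icc, Finset.mem_range, col]
    exact ⟨⟨by omega, hle⟩, Nat.mod_lt _ u.pos⟩
  have := Finset.card_le_card_of_injOn _ hmaps
    (height_col_injOn.mono fun g hg => (hS g (Finset.mem_coe.mp hg)).1)
  rw [Finset.card_product, Nat.card_Icc, Finset.card_range] at this
  exact this.trans (Nat.mul_le_mul_right _ (by omega))

lemma IsLayer.exists_below (hw : Function.Injective w) (hS : IsLayer G w e B D i S)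
    {g : Sym2 (Fin N)} (hg : g ∈ S) {u : Fin N} (hu : u ∈ g) {j : ℕ} (hj : j ∈ Finset.Icc 1 D)
    (hk : D * (i + 1) < height N G w e) (hB : B + D * (i + 1) ≤ height N G w e) :
    ∃ f, height N G w f + j = height N G w g ∧ col N G w f = u ∧
      IsLayer G w e B D (i + 1) {f} := by
  rw [Finset.mem_Icc] at hj
  obtain ⟨hgE, hle, hge, -, harr⟩ := hS g hg
  have hDi : D * (i + 1) = D * i + D := Nat.mul_succ D i
  obtain ⟨f, hfE, hfu, hfh, hfc, hfw⟩ :=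
    exists_heavier_of_lt_height hw hgE hu (r := height N G w g - 1 - j) (by omega)
  have hlow : height N G w e ≤ height N G w f + D * (i + 1) := by omega
  have hBf : B ≤ height N G w f := by
    have : (height N G w e : ℝ) ≤ height N G w f + D * (i + 1) := by exact_mod_cast hlow
    linarith
  obtain ⟨hclimb, harr'⟩ := (harr u hu).extend hfE hfu hfw hBf
  refine ⟨f, by omega, hfc, fun f' hf' => ?_⟩
  obtain rfl := Finset.mem_singleton.mp hf'
  exact ⟨hfE, by omega, hlow, hclimb, harr'⟩

lemma IsLayer.exists_succ (hw : Function.Injective w) (hS : IsLayer G w e B D i S)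
    (hk : D * (i + 1) < height N G w e) (hB : B + D * (i + 1) ≤ height N G w e) :
    ∃ S', D * (coveredVerts S).card ≤ S'.card ∧ IsLayer G w e B D (i + 1) S' := by
  obtain hempty | ⟨v, -⟩ := (coveredVerts S).eq_empty_or_nonempty
  · exact ⟨∅, by simp [hempty], by simp [IsLayer]⟩
  have : Nonempty (Sym2 (Fin N)) := ⟨s(v, v)⟩
  have hcov : ∀ u ∈ coveredVerts S, ∃ g ∈ S, u ∈ g := by simp [coveredVerts]
  choose! g hgS hug using hcov
  have hcell : ∀ p ∈ coveredVerts S ×ˢ Finset.Icc 1 D, ∃ f,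
      height N G w f + p.2 = height N G w (g p.1) ∧ col N G w f = p.1 ∧
      IsLayer G w e B D (i + 1) {f} := fun p hp =>
    hS.exists_below hw (hgS _ (Finset.mem_product.mp hp).1) (hug _ (Finset.mem_product.mp hp).1)
      (Finset.mem_product.mp hp).2 hk hB
  choose! F hFh hFc hFS using hcell
  refine ⟨(coveredVerts S ×ˢ Finset.Icc 1 D).image F, ?_, fun f hf => ?_⟩
  · rw [Finset.card_image_of_injOn, Finset.card_product, Nat.card_Icc, Nat.add_sub_cancel,
      mul_comm]
    rintro ⟨u, j⟩ hp ⟨u', j'⟩ hp' hF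
    obtain rfl : u = u' := Fin.ext (by rw [← hFc _ hp, ← hFc _ hp', hF])
    have h := hFh _ hp
    have h' := hFh _ hp'
    rw [hF] at h
    dsimp only at h h'
    rw [Prod.mk.injEq]
    omega
  · obtain ⟨p, hp, rfl⟩ := Finset.mem_image.mp hf
    exact hFS p hp _ (Finset.mem_singleton_self _)

lemma exists_dense_layer (hw : Function.Injective w) (he : e ∈ G.edgeSet) {h : ℝ}
    (hD : 6 * h ≤ D) {L : ℕ} (hL : (D * L + 1) * N < 12 ^ L) (hk : D * L < height N G w e)
    (hB : B + D * L ≤ height N G w e) :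
    ∃ i < L, ∃ S, S.Nonempty ∧ IsLayer G w e B D i S ∧
      h * (coveredVerts S).card ≤ 2 * S.card := by
  by_contra! hsparse
  have hgrow : ∀ i ≤ L, ∃ S, 12 ^ i ≤ S.card ∧ IsLayer G w e B D i S := by
    intro i
    induction i with
    | zero =>
      intro _
      refine ⟨{e}, by simp, isLayer_zero he ?_⟩
      have : (0 : ℝ) ≤ D * L := by positivity
      linarith
    | succ i ih =>
      intro hi
      obtain ⟨S, hcard, hS⟩ := ih (by omega)
      have hne : S.Nonempty := Finset.card_pos.mp ((Nat.one_le_pow _ _ (by norm_num)).trans hcard)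
      have hDi : D * (i + 1) ≤ D * L := Nat.mul_le_mul_left _ hi
      have hDi' : (D : ℝ) * (i + 1) ≤ D * L := by exact_mod_cast hDi
      obtain ⟨S', hS'card, hS'⟩ := hS.exists_succ hw (by omega) (by linarith)
      refine ⟨S', ?_, hS'⟩
      have h12 : (12 : ℝ) ^ i ≤ S.card := by exact_mod_cast hcard
      have hcov : (D : ℝ) * (coveredVerts S).card ≤ S'.card := by exact_mod_cast hS'card
      have := hsparse i (by omega) S hne hS
      have := mul_le_mul_of_nonneg_right hD (Nat.cast_nonneg (α := ℝ) (coveredVerts S).card)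
      have : (12 : ℝ) ^ (i + 1) ≤ S'.card := by rw [pow_succ]; linarith
      exact_mod_cast this
  obtain ⟨S, hcard, hS⟩ := hgrow L le_rfl
  exact (hcard.trans hS.card_le).not_gt hL

lemma exists_dense_subgraph (hw : Function.Injective w) (he : e ∈ G.edgeSet) {h : ℝ}
    (hD : 6 * h ≤ D) {L : ℕ} (hL : (D * L + 1) * N < 12 ^ L) (hk : D * L < height N G w e)
    (hB : B + D * L ≤ height N G w e) :
    ∃ H : G.Subgraph, H.verts.Nonempty ∧
      h ≤ 2 * (H.edgeSet.ncard : ℝ) / (H.verts.ncard : ℝ) ∧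
      ∀ f ∈ H.edgeSet, ClimbsTo G w e B L f := by
  obtain ⟨i, hi, S, ⟨g, hg⟩, hS, hdense⟩ := exists_dense_layer hw he hD hL hk hB
  obtain ⟨H, hE, hV⟩ := exists_subgraph_edgeSet_eq S fun g hg => (hS g hg).1
  have hv : g.out.1 ∈ coveredVerts S := by
    simpa [coveredVerts] using ⟨g, hg, g.out_fst_mem⟩
  refine ⟨H, ⟨_, by rwa [hV, Finset.mem_coe]⟩, ?_, fun f hf => ?_⟩
  · have hpos : (0 : ℝ) < (coveredVerts S).card := by
      exact_mod_cast Finset.card_pos.mpr ⟨_, hv⟩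
    rw [hE, hV, Set.ncard_coe_finset, Set.ncard_coe_finset, le_div_iff₀ hpos]
    linarith
  · obtain ⟨x, y, T, hT, hlast⟩ := (hS f (by rwa [hE] at hf)).2.2.2.1
    exact ⟨x, y, T, hT.mono hi, hlast⟩

end Layers

lemma three_mul_sq_lt_twelve_pow (n : ℕ) : 3 * n ^ 2 < 12 ^ (Nat.log 2 n + 1) := by
  set L := Nat.log 2 n + 1
  have hn : n < 2 ^ L := Nat.lt_pow_succ_log_self (by norm_num) n
  calc 3 * n ^ 2 ≤ 3 ^ L * n ^ 2 := Nat.mul_le_mul_right _ (Nat.le_self_pow (by omega) 3)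
    _ < 3 ^ L * (2 ^ L) ^ 2 :=
        Nat.mul_lt_mul_of_pos_left (Nat.pow_lt_pow_left hn two_ne_zero) (by positivity)
    _ = 12 ^ L := by rw [← pow_mul, mul_comm L 2, pow_mul, ← mul_pow]; norm_num

lemma exists_growth_parameters {h : ℝ} (hh : 1 ≤ h) {N n k : ℕ} (hNn : N ≤ n) (hk0 : 0 < k)
    (hkn : k < n) (hk : 21 * h * Real.logb 2 n ≤ k) :
    ∃ D L : ℕ, 6 * h ≤ D ∧ (D * L + 1) * N < 12 ^ L ∧ D * L < k ∧
      (D * L : ℝ) ≤ 7 * h * (Real.logb 2 n + 1) ∧ (L : ℝ) ≤ Real.logb 2 n + 1 := by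
  set lg := Real.logb 2 (n : ℝ)
  have hn : (2 : ℝ) ≤ n := by exact_mod_cast (by omega : 2 ≤ n)
  have hlg : 1 ≤ lg :=
    (Real.le_logb_iff_rpow_le (by norm_num) (by linarith)).mpr (by rwa [Real.rpow_one])
  have hL : (Nat.log 2 n : ℝ) ≤ lg := by exact_mod_cast Real.natLog_le_logb n 2
  have hD : (⌊7 * h⌋₊ : ℝ) ≤ 7 * h := Nat.floor_le (by positivity)
  have hDL : (⌊7 * h⌋₊ * (Nat.log 2 n + 1 : ℕ) : ℝ) ≤ 7 * h * (lg + 1) := by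
    push_cast
    gcongr
  have hDLk : (⌊7 * h⌋₊ * (Nat.log 2 n + 1 : ℕ) : ℝ) < k := by nlinarith
  refine ⟨⌊7 * h⌋₊, Nat.log 2 n + 1, by linarith [Nat.sub_one_lt_floor (7 * h)], ?_,
    by exact_mod_cast hDLk, hDL, by push_cast; linarith⟩
  have h12 : (3 * n ^ 2 : ℝ) < 12 ^ (Nat.log 2 n + 1) := by
    exact_mod_cast three_mul_sq_lt_twelve_pow n
  have hN : (N : ℝ) ≤ n := by exact_mod_cast hNn
  have hk' : (k : ℝ) < n := by exact_mod_cast hkn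
  have : ((⌊7 * h⌋₊ * (Nat.log 2 n + 1) + 1) * N : ℕ) < (12 : ℝ) ^ (Nat.log 2 n + 1) := by
    push_cast at hDLk ⊢
    nlinarith
  exact_mod_cast this

end EO

/-- Lemma 4.2.  Let `G` be an ordered graph with at most `n` vertices,
`h ≥ 1` a real number, and `e ∈ E(G)` an edge with `h(e, G) ≥ 21·h·log₂ n`.  Then there is
a subgraph `H ⊆ G` with average degree `d̄(H) ≥ h` such that for every `f ∈ E(H)` there is
an increasing trail `T` in `G` which starts with `e`, ends with `f`, has length at most
`2 + log₂ n`, and all of whose edges `g` satisfy `h(g, G) ≥ h(e, G) − 7h(log₂ n + 2)`. -/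
theorem stmt12 (N n : ℕ) (hNn : N ≤ n) (G : SimpleGraph (Fin N))
    (wt : Sym2 (Fin N) → ℕ) (hw : Function.Injective wt)
    (h : ℝ) (hh : 1 ≤ h) (e : Sym2 (Fin N)) (he : e ∈ G.edgeSet)
    (hhe : 21 * h * Real.logb 2 (n : ℝ) ≤ (EO.height N G wt e : ℝ)) :
    ∃ H : G.Subgraph, H.verts.Nonempty ∧
      h ≤ 2 * (H.edgeSet.ncard : ℝ) / (H.verts.ncard : ℝ) ∧
      ∀ f ∈ H.edgeSet, ∃ (x y : Fin N) (T : G.Walk x y), T.IsTrail ∧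
        EO.Increasing wt T.edges ∧
        T.edges.head? = some e ∧ T.edges.getLast? = some f ∧
        (T.length : ℝ) ≤ 2 + Real.logb 2 (n : ℝ) ∧
        ∀ g ∈ T.edges,
          (EO.height N G wt e : ℝ) - 7 * h * (Real.logb 2 (n : ℝ) + 2) ≤
            (EO.height N G wt g : ℝ) := by
  obtain ⟨u, hu⟩ : ∃ u, u ∈ e := ⟨_, e.out_fst_mem⟩
  have hkn : EO.height N G wt e < n := by
    have := (EO.height_le_degree hw he hu).trans_lt (G.degree_lt_card_verts u)
    rw [Fintype.card_fin] at this
    omega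
  obtain ⟨D, L, hD, hL, hk, hDL, hLn⟩ :=
    EO.exists_growth_parameters hh hNn (Nat.le_add_left _ _) hkn hhe
  obtain ⟨H, hV, hdense, hclimb⟩ :=
    EO.exists_dense_subgraph (B := EO.height N G wt e - 7 * h * (Real.logb 2 n + 2)) hw he hD
      hL hk (by linarith)
  refine ⟨H, hV, hdense, fun f hf => ?_⟩
  obtain ⟨x, y, T, ⟨hinc, hhead, hlen, hheight⟩, hlast⟩ := hclimb f hf
  refine ⟨x, y, T, ⟨hinc.nodup⟩, hinc, hhead, hlast, ?_, hheight⟩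
  have : (T.length : ℝ) ≤ L := by exact_mod_cast hlen
  linarith
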